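/- Let f ∈ H²_ω with f(0) ≠ 0, and suppose the first-order optimal polynomial approximant q₁ of 1/f has a zero z₁. Then z₁ = ‖zf‖²_ω / ⟨f, zf⟩_ω (in particular ⟨f, zf⟩_ω ≠ 0). -/

import Mathlib

open scoped BigOperators
open Polynomial Filter

noncomputable section

/-- Coefficient sequence of the product p·f, where f is an analytic function on the disk
given by its Taylor coefficient sequence. -/
def polyMulSeq (p : Polynomial ℂ) (f : ℕ → ℂ) : ℕ → ℂ :=
  fun n => ∑ j ∈ Finset.range (n + 1), p.coeff j * f (n - j)

/-- The constant function 1 as a Taylor coefficient sequence. -/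
def oneSeq : ℕ → ℂ := fun n => if n = 0 then 1 else 0

/-- Membership in the weighted Hardy space H²_ω. -/
def MemHw (ω : ℕ → ℝ) (f : ℕ → ℂ) : Prop :=
  Summable (fun k => ‖f k‖ ^ 2 * ω k)

/-- Squared weighted norm ‖f‖²_ω. -/
def wNormSq (ω : ℕ → ℝ) (f : ℕ → ℂ) : ℝ := ∑' k, ‖f k‖ ^ 2 * ω k

/-- Weighted inner product ⟨f,g⟩_ω. -/
def wInner (ω : ℕ → ℝ) (f g : ℕ → ℂ) : ℂ :=
  ∑' k, f k * (starRingEnd ℂ) (g k) * (ω k : ℂ)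

/-- `q` is the n-th optimal polynomial approximant of 1/f in H²_ω. -/
def IsOPA (ω : ℕ → ℝ) (f : ℕ → ℂ) (n : ℕ) (q : Polynomial ℂ) : Prop :=
  q.natDegree ≤ n ∧
  ∀ p : Polynomial ℂ, p.natDegree ≤ n →
    wNormSq ω (polyMulSeq q f - oneSeq) ≤ wNormSq ω (polyMulSeq p f - oneSeq)

/-! Via `f ↦ (√ω_k f_k)_k`, `H²_ω` sits isometrically in `ℓ²`. There `q₁ f` is the best
approximation of `1` from `span {f, zf}`, so the residual `q₁ f - 1` is orthogonal to `f` and to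
`zf`. Write `q₁ = b z + a`. If `b = 0`, a zero of `q₁` forces `q₁ = 0`, and the residual `-1` is
not orthogonal to `f` because `f(0) ≠ 0`. Otherwise `a = -b z₁`, and since `⟨1, zf⟩ = 0`,
orthogonality to `zf` reads `b (‖zf‖² - z₁ ⟨f, zf⟩) = 0`; finally `‖zf‖ > 0`. -/

open scoped InnerProductSpace lp

section BestApproximation

variable {𝕜 E : Type*} [RCLike 𝕜] [NormedAddCommGroup E] [InnerProductSpace 𝕜 E]

lemma inner_sub_eq_zero_of_forall_norm_sub_le {K : Submodule 𝕜 E} {u v : E} (hv : v ∈ K)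
    (hmin : ∀ w ∈ K, ‖u - v‖ ≤ ‖u - w‖) : ∀ w ∈ K, ⟪w, u - v⟫_𝕜 = 0 := by
  have hinf : ‖u - v‖ = ⨅ w : K, ‖u - w‖ :=
    le_antisymm (le_ciInf fun w => hmin w w.2)
      (ciInf_le (f := fun w : K => ‖u - w‖)
        ⟨0, Set.forall_mem_range.2 fun _ => norm_nonneg _⟩ ⟨v, hv⟩)
  exact fun w hw => inner_eq_zero_symm.1 ((K.norm_eq_iInf_iff_inner_eq_zero hv).1 hinf w hw)

theorem eq_norm_sq_div_inner_of_forall_norm_sub_le {x z e : E} (hze : ⟪z, e⟫_𝕜 = 0)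
    (hxe : ⟪x, e⟫_𝕜 ≠ 0) (hz : z ≠ 0) {a b z₁ : 𝕜}
    (hmin : ∀ c d : 𝕜, ‖e - (b • z + a • x)‖ ≤ ‖e - (c • z + d • x)‖) (hroot : b * z₁ + a = 0) :
    ⟪z, x⟫_𝕜 ≠ 0 ∧ z₁ = (‖z‖ : 𝕜) ^ 2 / ⟪z, x⟫_𝕜 := by
  have hperp := inner_sub_eq_zero_of_forall_norm_sub_le (K := Submodule.span 𝕜 {z, x})
    (Submodule.mem_span_pair.2 ⟨b, a, rfl⟩)
    (fun w hw => by obtain ⟨c, d, rfl⟩ := Submodule.mem_span_pair.1 hw; exact hmin c d)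
  have hz_perp := hperp z (Submodule.subset_span (by simp))
  have hx_perp := hperp x (Submodule.subset_span (by simp))
  simp only [inner_sub_right, inner_add_right, inner_smul_right, inner_self_eq_norm_sq_to_K]
    at hz_perp hx_perp
  have hb : b ≠ 0 := by
    rintro rfl
    obtain rfl : a = 0 := by simpa using hroot
    exact hxe (by simpa using hx_perp)
  have hkey : z₁ * ⟪z, x⟫_𝕜 = (‖z‖ : 𝕜) ^ 2 := by
    refine mul_left_cancel₀ hb ?_
    linear_combination hz_perp - hze + ⟪z, x⟫_𝕜 * hroot
  have hzx : ⟪z, x⟫_𝕜 ≠ 0 := by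
    intro h
    rw [h, mul_zero, eq_comm] at hkey
    exact hz (by simpa using hkey)
  exact ⟨hzx, eq_div_of_mul_eq hzx hkey⟩

end BestApproximation

lemma polyMulSeq_add (p p' : ℂ[X]) (f : ℕ → ℂ) :
    polyMulSeq (p + p') f = polyMulSeq p f + polyMulSeq p' f := by
  funext n
  simp [polyMulSeq, add_mul, Finset.sum_add_distrib]

lemma polyMulSeq_C_mul (c : ℂ) (p : ℂ[X]) (f : ℕ → ℂ) :
    polyMulSeq (C c * p) f = c • polyMulSeq p f := by
  funext n
  simp [polyMulSeq, mul_assoc, Finset.mul_sum]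

lemma polyMulSeq_C (a : ℂ) (f : ℕ → ℂ) : polyMulSeq (C a) f = a • f := by
  funext n
  rw [polyMulSeq, Finset.sum_eq_single_of_mem 0 (Finset.mem_range.2 n.succ_pos)]
  · simp
  · intro j _ hj
    simp [coeff_C, hj]

lemma polyMulSeq_X_zero (f : ℕ → ℂ) : polyMulSeq X f 0 = 0 := by
  simp [polyMulSeq]

lemma polyMulSeq_X_succ (f : ℕ → ℂ) (n : ℕ) : polyMulSeq X f (n + 1) = f n := by
  rw [polyMulSeq, Finset.sum_eq_single_of_mem 1 (Finset.mem_range.2 (by omega))]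
  · simp
  · intro j _ hj
    simp [coeff_X, Ne.symm hj]

section WeightedHardySpace

variable {ω : ℕ → ℝ}

lemma memHw_oneSeq (ω : ℕ → ℝ) : MemHw ω oneSeq :=
  summable_of_ne_finset_zero (s := {0}) fun k hk => by
    simp [oneSeq, Finset.mem_singleton.not.1 hk]

lemma memℓp_sqrt_mul (hω : ∀ k, 0 ≤ ω k) {f : ℕ → ℂ} (hf : MemHw ω f) :
    Memℓp (fun k => (√(ω k) : ℂ) * f k) 2 := by
  refine (memℓp_gen_iff (by norm_num)).2 (hf.congr fun k => ?_)
  rw [ENNReal.toReal_ofNat, Real.rpow_two, norm_mul, Complex.norm_real,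
    Real.norm_of_nonneg (Real.sqrt_nonneg _), mul_pow, Real.sq_sqrt (hω k)]
  norm_num [mul_comm]

def MemHw.toL2 (hω : ∀ k, 0 ≤ ω k) {f : ℕ → ℂ} (hf : MemHw ω f) : ℓ²(ℕ, ℂ) :=
  ⟨_, memℓp_sqrt_mul hω hf⟩

lemma MemHw.toL2_apply (hω : ∀ k, 0 ≤ ω k) {f : ℕ → ℂ} (hf : MemHw ω f) (k : ℕ) :
    hf.toL2 hω k = √(ω k) * f k :=
  rfl

lemma wInner_eq_inner (hω : ∀ k, 0 ≤ ω k) {s t : ℕ → ℂ} {u v : ℓ²(ℕ, ℂ)}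
    (hu : ∀ k, u k = √(ω k) * s k) (hv : ∀ k, v k = √(ω k) * t k) :
    wInner ω s t = ⟪v, u⟫_ℂ := by
  rw [lp.inner_eq_tsum, wInner]
  refine tsum_congr fun k => ?_
  rw [hu, hv, RCLike.inner_apply, map_mul, Complex.conj_ofReal]
  have hsq : (√(ω k) : ℂ) * √(ω k) = ω k := by exact_mod_cast Real.mul_self_sqrt (hω k)
  linear_combination (s k * (starRingEnd ℂ) (t k)) * hsq.symm

lemma wInner_self (ω : ℕ → ℝ) (s : ℕ → ℂ) : wInner ω s s = wNormSq ω s := by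
  rw [wInner, wNormSq, Complex.ofReal_tsum]
  refine tsum_congr fun k => ?_
  rw [Complex.mul_conj']
  push_cast
  ring

lemma wNormSq_eq_norm_sq (hω : ∀ k, 0 ≤ ω k) {s : ℕ → ℂ} {u : ℓ²(ℕ, ℂ)}
    (hu : ∀ k, u k = √(ω k) * s k) : wNormSq ω s = ‖u‖ ^ 2 := by
  have h := (wInner_self ω s).symm.trans (wInner_eq_inner hω hu hu)
  rw [inner_self_eq_norm_sq_to_K, ← RCLike.ofReal_pow] at h
  exact RCLike.ofReal_injective h

lemma wInner_oneSeq_left (ω : ℕ → ℝ) (t : ℕ → ℂ) :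
    wInner ω oneSeq t = (starRingEnd ℂ) (t 0) * ω 0 := by
  rw [wInner, tsum_eq_single 0 fun k hk => by simp [oneSeq, hk]]
  simp [oneSeq]

lemma MemHw.inner_toL2 (hω : ∀ k, 0 ≤ ω k) {f g : ℕ → ℂ} (hf : MemHw ω f) (hg : MemHw ω g) :
    ⟪hg.toL2 hω, hf.toL2 hω⟫_ℂ = wInner ω f g :=
  (wInner_eq_inner hω (fun _ => rfl) (fun _ => rfl)).symm

lemma MemHw.norm_toL2_sq (hω : ∀ k, 0 ≤ ω k) {f : ℕ → ℂ} (hf : MemHw ω f) :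
    ‖hf.toL2 hω‖ ^ 2 = wNormSq ω f :=
  (wNormSq_eq_norm_sq hω fun _ => rfl).symm

lemma MemHw.toL2_ne_zero (hω : ∀ k, 0 ≤ ω k) {f : ℕ → ℂ} (hf : MemHw ω f) {k : ℕ}
    (hωk : 0 < ω k) (hfk : f k ≠ 0) : hf.toL2 hω ≠ 0 := fun h => by
  have hk := congrArg (fun u : ℓ²(ℕ, ℂ) => u k) h
  simp only [MemHw.toL2_apply, lp.coeFn_zero, Pi.zero_apply] at hk
  exact (Real.sqrt_pos.2 hωk).ne' (by simpa [hfk] using hk)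

lemma wNormSq_polyMulSeq_linear_sub_oneSeq (hω : ∀ k, 0 ≤ ω k) {f : ℕ → ℂ} (hf : MemHw ω f)
    (hzf : MemHw ω (polyMulSeq X f)) (c d : ℂ) :
    wNormSq ω (polyMulSeq (C c * X + C d) f - oneSeq) =
      ‖(memHw_oneSeq ω).toL2 hω - (c • hzf.toL2 hω + d • hf.toL2 hω)‖ ^ 2 := by
  rw [norm_sub_rev]
  refine wNormSq_eq_norm_sq hω fun k => ?_
  simp only [polyMulSeq_add, polyMulSeq_C_mul, polyMulSeq_C, lp.coeFn_sub, lp.coeFn_add,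
    lp.coeFn_smul, Pi.sub_apply, Pi.add_apply, Pi.smul_apply, smul_eq_mul, MemHw.toL2_apply]
  ring

end WeightedHardySpace

theorem stmt_11_general (ω : ℕ → ℝ) (hωpos : ∀ k, 0 < ω k)
    (f : ℕ → ℂ) (hf : MemHw ω f) (hf0 : f 0 ≠ 0)
    (hzf : MemHw ω (polyMulSeq Polynomial.X f))
    (q : Polynomial ℂ) (hq : IsOPA ω f 1 q)
    (z₁ : ℂ) (hz : q.eval z₁ = 0) :
    wInner ω f (polyMulSeq Polynomial.X f) ≠ 0 ∧
    z₁ = (wNormSq ω (polyMulSeq Polynomial.X f) : ℂ) /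
          wInner ω f (polyMulSeq Polynomial.X f) := by
  have hω k : 0 ≤ ω k := (hωpos k).le
  set F := hf.toL2 hω
  set Z := hzf.toL2 hω
  set e := (memHw_oneSeq ω).toL2 hω
  obtain ⟨b, a, rfl⟩ := exists_eq_X_add_C_of_natDegree_le_one hq.1
  have hmin (c d : ℂ) : ‖e - (b • Z + a • F)‖ ≤ ‖e - (c • Z + d • F)‖ := by
    have h := hq.2 (C c * X + C d) natDegree_linear_le
    rw [wNormSq_polyMulSeq_linear_sub_oneSeq hω hf hzf,
      wNormSq_polyMulSeq_linear_sub_oneSeq hω hf hzf] at h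
    exact (pow_le_pow_iff_left₀ (norm_nonneg _) (norm_nonneg _) two_ne_zero).1 h
  have hZe : ⟪Z, e⟫_ℂ = 0 := by
    rw [MemHw.inner_toL2, wInner_oneSeq_left, polyMulSeq_X_zero, map_zero, zero_mul]
  have hFe : ⟪F, e⟫_ℂ ≠ 0 := by
    rw [MemHw.inner_toL2, wInner_oneSeq_left]
    simpa using ⟨hf0, (hωpos 0).ne'⟩
  have hZ : Z ≠ 0 := hzf.toL2_ne_zero hω (hωpos 1) (by rwa [polyMulSeq_X_succ])
  rw [← hf.inner_toL2 hω hzf, ← hzf.norm_toL2_sq hω]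
  push_cast
  exact eq_norm_sq_div_inner_of_forall_norm_sub_le hZe hFe hZ hmin (by simpa using hz)

/-- A zero z₁ of the first-order opa of 1/f satisfies z₁ = ‖zf‖²_ω / ⟨f, zf⟩_ω. -/
theorem stmt_11 (ω : ℕ → ℝ) (hω0 : ω 0 = 1) (hωpos : ∀ k, 0 < ω k)
    (f : ℕ → ℂ) (hf : MemHw ω f) (hf0 : f 0 ≠ 0)
    (hzf : MemHw ω (polyMulSeq Polynomial.X f))
    (q : Polynomial ℂ) (hq : IsOPA ω f 1 q)
    (z₁ : ℂ) (hz : q.eval z₁ = 0) :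
    wInner ω f (polyMulSeq Polynomial.X f) ≠ 0 ∧
    z₁ = (wNormSq ω (polyMulSeq Polynomial.X f) : ℂ) /
          wInner ω f (polyMulSeq Polynomial.X f) :=
  stmt_11_general ω hωpos f hf hf0 hzf q hq z₁ hz
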